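/- For ζ = (π/2)(ρα + iβ) with α, β, ρ real, ρ > 0, and q = e^{−ρπ}, one has Σ_{i=1}^4 ϑᵢ(ζ,q)·ϑᵢ(ζ̄,q) = √(2/ρ) · e^{−πα²ρ/2} · Σ_{(k,ℓ)∈ℤ²} e^{πα k} e^{πβ ℓ} e^{−π(k²/ρ + ρℓ²)/2}. -/

import Mathlib

open Complex

/-- `ϑ₁(ζ, q)` with `q = e^{-ρπ}`, half-integer powers `q^{(k+1/2)²} = e^{-ρπ(k+1/2)²}`. -/
noncomputable def theta1 (ζ : ℂ) (ρ : ℝ) : ℂ :=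
  ∑' k : ℤ, (-1 : ℂ) ^ k * Complex.I * Complex.exp ((2 * (k : ℂ) + 1) * Complex.I * ζ) *
    Complex.exp (-(ρ : ℂ) * (Real.pi : ℂ) * ((k : ℂ) + 1 / 2) ^ 2)

/-- `ϑ₂(ζ, q)` with `q = e^{-ρπ}`. -/
noncomputable def theta2 (ζ : ℂ) (ρ : ℝ) : ℂ :=
  ∑' k : ℤ, Complex.exp ((2 * (k : ℂ) + 1) * Complex.I * ζ) *
    Complex.exp (-(ρ : ℂ) * (Real.pi : ℂ) * ((k : ℂ) + 1 / 2) ^ 2)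

/-- `ϑ₃(ζ, q)` with `q = e^{-ρπ}`. -/
noncomputable def theta3 (ζ : ℂ) (ρ : ℝ) : ℂ :=
  ∑' k : ℤ, Complex.exp (2 * (k : ℂ) * Complex.I * ζ) *
    Complex.exp (-(ρ : ℂ) * (Real.pi : ℂ) * (k : ℂ) ^ 2)

/-- `ϑ₄(ζ, q)` with `q = e^{-ρπ}`. -/
noncomputable def theta4 (ζ : ℂ) (ρ : ℝ) : ℂ :=
  ∑' k : ℤ, (-1 : ℂ) ^ k * Complex.exp (2 * (k : ℂ) * Complex.I * ζ) *
    Complex.exp (-(ρ : ℂ) * (Real.pi : ℂ) * (k : ℂ) ^ 2)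

/-!
Write `ϑ₃, ϑ₄` as (signed) sums of `q^{x²} e^{2ixζ}` over `x ∈ ℤ` and `ϑ₂, ϑ₁` as such sums over
`x ∈ ℤ + 1/2`. In `ϑ₃ϑ₃ + ϑ₄ϑ₄` and in `ϑ₁ϑ₁ + ϑ₂ϑ₂` the signs cancel the pairs `(x, y)` with
`x + y` odd, and the remaining pairs are parametrised by `u = (x + y)/2 ∈ ℤ` and `v = x - y`, even
in the first sum and odd in the second. Since `x² + y² = 2u² + v²/2`, the four products add up to
`2 ϑ₃(ζ + ζ', q²) ϑ₃((ζ - ζ')/2, q^{1/2})`. For `ζ' = ζ̄` the second factor is the `β`-series,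
and Jacobi's functional equation turns the first into the `α`-series.
-/

theorem HasSum.int_even_add_odd {M : Type*} [AddCommMonoid M] [TopologicalSpace M]
    [ContinuousAdd M] {f : ℤ → M} {a b : M} (he : HasSum (fun k ↦ f (2 * k)) a)
    (ho : HasSum (fun k ↦ f (2 * k + 1)) b) : HasSum f (a + b) := by
  have hbij : Function.Bijective (Sum.elim (2 * ·) (2 * · + 1) : ℤ ⊕ ℤ → ℤ) := by
    refine ⟨?_, fun n ↦ ?_⟩
    · rintro (k | k) (l | l) h <;> simp only [Sum.elim_inl, Sum.elim_inr] at h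
      exacts [congrArg _ (by omega), by omega, by omega, congrArg _ (by omega)]
    · obtain ⟨k, rfl | rfl⟩ := Int.even_or_odd' n
      exacts [⟨.inl k, rfl⟩, ⟨.inr k, rfl⟩]
  exact (Equiv.ofBijective _ hbij).hasSum_iff.mp (he.sum ho)

section ParityReindexing

variable {𝕜 : Type*} [NormedField 𝕜]

theorem tsum_one_add_neg_one_zpow_mul (r : ℤ) (F : ℤ × ℤ → 𝕜) :
    ∑' p : ℤ × ℤ, (1 + (-1) ^ (p.1 + p.2 + r)) * F p =
      2 * ∑' p : ℤ × ℤ, F (p.1 + p.2, p.1 - p.2 - r) := by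
  have hinj : Function.Injective fun p : ℤ × ℤ ↦ (p.1 + p.2, p.1 - p.2 - r) := by
    intro p p' h
    simp only [Prod.mk.injEq] at h
    ext <;> omega
  rw [← tsum_mul_left, ← hinj.tsum_eq]
  · refine tsum_congr fun p ↦ ?_
    rw [show p.1 + p.2 + (p.1 - p.2 - r) + r = 2 * p.1 by ring,
      (even_two_mul p.1).neg_one_zpow, one_add_one_eq_two]
  · rintro ⟨m, n⟩ hmn
    obtain ⟨u, hu⟩ : Even (m + n + r) := by
      by_contra hodd
      apply hmn
      dsimp only
      rw [(Int.not_even_iff_odd.mp hodd).neg_one_zpow, add_neg_cancel, zero_mul]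
    exact ⟨(u, m - u), by ext <;> simp only <;> omega⟩

variable [CompleteSpace 𝕜]

theorem tsum_mul_tsum_add_neg_one_zpow_mul (r : ℤ) {f g : ℤ → 𝕜}
    (hf : Summable fun m ↦ ‖f m‖) (hg : Summable fun n ↦ ‖g n‖) :
    (∑' m, f m) * (∑' n, g n) + (-1) ^ r * ((∑' m, (-1) ^ m * f m) * ∑' n, (-1) ^ n * g n) =
      2 * ∑' p : ℤ × ℤ, f (p.1 + p.2) * g (p.1 - p.2 - r) := by
  have h_sign (h : ℤ → 𝕜) (hh : Summable fun n ↦ ‖h n‖) :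
      Summable fun n ↦ ‖(-1) ^ n * h n‖ := by
    simpa only [norm_mul, norm_zpow, norm_neg, norm_one, one_zpow, one_mul] using hh
  rw [tsum_mul_tsum_of_summable_norm hf hg,
    tsum_mul_tsum_of_summable_norm (h_sign f hf) (h_sign g hg), ← tsum_mul_left,
    ← (summable_mul_of_summable_norm hf hg).tsum_add
      ((summable_mul_of_summable_norm (h_sign f hf) (h_sign g hg)).mul_left _),
    ← tsum_one_add_neg_one_zpow_mul r fun p ↦ f p.1 * g p.2]
  refine tsum_congr fun p ↦ ?_
  rw [zpow_add₀ (by norm_num), zpow_add₀ (by norm_num)]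
  ring

theorem tsum_mul_tsum_eq_tsum_mul_even_add_tsum_mul_odd {f g : ℤ → 𝕜} (hf : Summable fun m ↦ ‖f m‖)
    (hg : Summable fun n ↦ ‖g n‖) :
    (∑' m, f m) * (∑' n, g n) =
      ∑' p : ℤ × ℤ, f p.1 * g (2 * p.2) + ∑' p : ℤ × ℤ, f p.1 * g (2 * p.2 + 1) := by
  have h_even : Summable fun k ↦ ‖g (2 * k)‖ :=
    hg.comp_injective (mul_right_injective₀ two_ne_zero)
  have h_odd : Summable fun k ↦ ‖g (2 * k + 1)‖ :=
    hg.comp_injective ((add_left_injective 1).comp (mul_right_injective₀ two_ne_zero))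
  rw [← tsum_mul_tsum_of_summable_norm hf h_even, ← tsum_mul_tsum_of_summable_norm hf h_odd,
    ← mul_add, (h_even.of_norm.hasSum.int_even_add_odd h_odd.of_norm.hasSum).tsum_eq]

end ParityReindexing

theorem summable_norm_jacobiTheta₂_term {τ : ℂ} (hτ : 0 < τ.im) (z : ℂ) :
    Summable fun n : ℤ ↦ ‖jacobiTheta₂_term n z τ‖ :=
  summable_norm_iff.mpr ((summable_jacobiTheta₂_term_iff z τ).mpr hτ)

theorem jacobiTheta₂_ofReal_mul_I {t : ℝ} (ht : 0 < t) (z : ℂ) :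
    jacobiTheta₂ z (t * I) =
      (Real.sqrt t : ℂ)⁻¹ * exp (-Real.pi * z ^ 2 / t) * jacobiTheta₂ (I * z / t) (I / t) := by
  have ht' : (t : ℂ) ≠ 0 := ofReal_ne_zero.mpr ht.ne'
  have h_sqrt : ((-I * (t * I)) ^ (1 / 2 : ℂ)) = Real.sqrt t := by
    rw [show -I * (t * I) = ((t : ℝ) : ℂ) by linear_combination (-(t : ℂ)) * I_sq,
      Real.sqrt_eq_rpow, ofReal_cpow ht.le]
    norm_num
  have h_exp : -Real.pi * I * z ^ 2 / (t * I) = -Real.pi * z ^ 2 / t := by field_simp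
  have h_z : -(z / (t * I)) = I * z / t := by
    field_simp
    linear_combination (-z) * I_sq
  have h_τ : -1 / (t * I) = I / t := by
    field_simp
    linear_combination -I_sq
  rw [jacobiTheta₂_functional_equation, h_sqrt, h_exp, one_div, ← jacobiTheta₂_neg_left, h_z, h_τ]

/-- `q^{x²} e^{2ixζ}` with `q = e^{-ρπ}`. -/
noncomputable def thetaTerm (x ζ : ℂ) (ρ : ℝ) : ℂ :=
  exp (2 * x * I * ζ) * exp (-(ρ : ℂ) * (Real.pi : ℂ) * x ^ 2)

section ThetaTerm

variable {ρ : ℝ}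

theorem thetaTerm_int_add (k : ℤ) (c ζ : ℂ) :
    thetaTerm (k + c) ζ ρ =
      thetaTerm c ζ ρ * jacobiTheta₂_term k (ζ / Real.pi + c * ρ * I) (ρ * I) := by
  have hπ : (Real.pi : ℂ) ≠ 0 := ofReal_ne_zero.mpr Real.pi_ne_zero
  simp only [thetaTerm, jacobiTheta₂_term, ← exp_add]
  congr 1
  field_simp
  linear_combination (-(Real.pi : ℂ) * ρ * k * (k + 2 * c)) * I_sq

theorem summable_norm_thetaTerm_int_add (hρ : 0 < ρ) (c ζ : ℂ) :
    Summable fun k : ℤ ↦ ‖thetaTerm (k + c) ζ ρ‖ := by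
  have hτ : 0 < ((ρ : ℂ) * I).im := by simpa using hρ
  simp_rw [thetaTerm_int_add, norm_mul]
  exact (summable_norm_jacobiTheta₂_term hτ _).mul_left _

/-- The parallelogram law `x² + y² = ((x + y)² + (x - y)²) / 2` in the exponent. -/
theorem thetaTerm_mul_thetaTerm (ζ ζ' : ℂ) {x y : ℂ} (u v : ℤ) (hu : x + y = 2 * u)
    (hv : x - y = v) :
    thetaTerm x ζ ρ * thetaTerm y ζ' ρ =
      jacobiTheta₂_term u ((ζ + ζ') / Real.pi) (2 * ρ * I) *
        jacobiTheta₂_term v ((ζ - ζ') / (2 * Real.pi)) (ρ * I / 2) := by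
  have hπ : (Real.pi : ℂ) ≠ 0 := ofReal_ne_zero.mpr Real.pi_ne_zero
  obtain rfl : x = u + v / 2 := by linear_combination (hu + hv) / 2
  obtain rfl : y = u - v / 2 := by linear_combination hu - (hu + hv) / 2
  simp only [thetaTerm, jacobiTheta₂_term, ← exp_add]
  congr 1
  field_simp
  linear_combination (-2 * (Real.pi : ℂ) * ρ * (4 * u ^ 2 + v ^ 2)) * I_sq

end ThetaTerm

section ThetaProducts

variable {ρ : ℝ}

theorem theta1_eq_tsum_thetaTerm (ζ : ℂ) :
    theta1 ζ ρ = I * ∑' k : ℤ, (-1) ^ k * thetaTerm (k + 1 / 2) ζ ρ := by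
  rw [theta1, ← tsum_mul_left]
  refine tsum_congr fun k ↦ ?_
  rw [thetaTerm]
  ring_nf

theorem theta2_eq_tsum_thetaTerm (ζ : ℂ) :
    theta2 ζ ρ = ∑' k : ℤ, thetaTerm (k + 1 / 2) ζ ρ := by
  refine tsum_congr fun k ↦ ?_
  rw [thetaTerm]
  ring_nf

theorem theta3_eq_tsum_thetaTerm (ζ : ℂ) : theta3 ζ ρ = ∑' k : ℤ, thetaTerm (k + 0) ζ ρ := by
  simp only [add_zero]
  rfl

theorem theta4_eq_tsum_thetaTerm (ζ : ℂ) :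
    theta4 ζ ρ = ∑' k : ℤ, (-1) ^ k * thetaTerm (k + 0) ζ ρ := by
  refine tsum_congr fun k ↦ ?_
  rw [add_zero, thetaTerm, mul_assoc]

theorem tsum_thetaTerm_mul_add_neg_one_zpow_mul (hρ : 0 < ρ) (r : ℤ) {c : ℂ} (hc : 2 * c = r)
    (ζ ζ' : ℂ) :
    (∑' k : ℤ, thetaTerm (k + c) ζ ρ) * (∑' k : ℤ, thetaTerm (k + c) ζ' ρ) +
        (-1) ^ r * ((∑' k : ℤ, (-1) ^ k * thetaTerm (k + c) ζ ρ) *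
          ∑' k : ℤ, (-1) ^ k * thetaTerm (k + c) ζ' ρ) =
      2 * ∑' p : ℤ × ℤ, jacobiTheta₂_term p.1 ((ζ + ζ') / Real.pi) (2 * ρ * I) *
        jacobiTheta₂_term (2 * p.2 + r) ((ζ - ζ') / (2 * Real.pi)) (ρ * I / 2) := by
  rw [tsum_mul_tsum_add_neg_one_zpow_mul r (summable_norm_thetaTerm_int_add hρ c ζ)
    (summable_norm_thetaTerm_int_add hρ c ζ')]
  congr 1
  refine tsum_congr fun p ↦ thetaTerm_mul_thetaTerm ζ ζ' _ _ ?_ ?_ <;> push_cast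
  · linear_combination hc
  · ring

theorem sum_theta_mul_theta (hρ : 0 < ρ) (ζ ζ' : ℂ) :
    theta1 ζ ρ * theta1 ζ' ρ + theta2 ζ ρ * theta2 ζ' ρ + theta3 ζ ρ * theta3 ζ' ρ +
        theta4 ζ ρ * theta4 ζ' ρ =
      2 * jacobiTheta₂ ((ζ + ζ') / Real.pi) (2 * ρ * I) *
        jacobiTheta₂ ((ζ - ζ') / (2 * Real.pi)) (ρ * I / 2) := by
  have h_odd := tsum_thetaTerm_mul_add_neg_one_zpow_mul hρ 1 (c := 1 / 2) (by norm_num) ζ ζ'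
  have h_even := tsum_thetaTerm_mul_add_neg_one_zpow_mul hρ 0 (c := 0) (by norm_num) ζ ζ'
  rw [← theta2_eq_tsum_thetaTerm, ← theta2_eq_tsum_thetaTerm] at h_odd
  rw [← theta3_eq_tsum_thetaTerm, ← theta3_eq_tsum_thetaTerm, ← theta4_eq_tsum_thetaTerm,
    ← theta4_eq_tsum_thetaTerm] at h_even
  simp only [zpow_one, zpow_zero, add_zero, one_mul] at h_odd h_even
  have hτ₁ : 0 < (2 * (ρ : ℂ) * I).im := by simpa using hρ
  have hτ₂ : 0 < ((ρ : ℂ) * I / 2).im := by simpa using hρ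
  rw [mul_assoc, jacobiTheta₂, jacobiTheta₂, tsum_mul_tsum_eq_tsum_mul_even_add_tsum_mul_odd
    (summable_norm_jacobiTheta₂_term hτ₁ _) (summable_norm_jacobiTheta₂_term hτ₂ _),
    theta1_eq_tsum_thetaTerm, theta1_eq_tsum_thetaTerm]
  linear_combination h_odd + h_even +
    ((∑' k : ℤ, (-1) ^ k * thetaTerm (k + 1 / 2) ζ ρ) *
      ∑' k : ℤ, (-1) ^ k * thetaTerm (k + 1 / 2) ζ' ρ) * I_sq

end ThetaProducts

theorem two_mul_jacobiTheta₂_two_mul_I {ρ : ℝ} (hρ : 0 < ρ) (α : ℝ) :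
    2 * jacobiTheta₂ (ρ * α) (2 * ρ * I) =
      Real.sqrt (2 / ρ) * exp (-Real.pi * α ^ 2 * ρ / 2) *
        jacobiTheta₂ (I * α / 2) (I / (2 * ρ)) := by
  have hρ' : (ρ : ℂ) ≠ 0 := ofReal_ne_zero.mpr hρ.ne'
  have h_sqrt : 2 * (Real.sqrt (2 * ρ) : ℂ)⁻¹ = Real.sqrt (2 / ρ) := by
    have h2ρ : Real.sqrt (2 * ρ) ≠ 0 := by positivity
    rw [← ofReal_inv, ← ofReal_ofNat, ← ofReal_mul]
    congr 1
    field_simp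
    rw [← Real.sqrt_mul (by positivity), show 2 * ρ * (2 / ρ) = 2 ^ 2 by field_simp,
      Real.sqrt_sq zero_le_two]
  have := jacobiTheta₂_ofReal_mul_I (by positivity : 0 < 2 * ρ) (ρ * α)
  push_cast at this
  have h_exp : -(Real.pi : ℂ) * (ρ * α) ^ 2 / (2 * ρ) = -Real.pi * α ^ 2 * ρ / 2 := by
    field_simp
  have h_z : I * (ρ * α) / (2 * ρ) = I * α / 2 := by field_simp
  rw [this, h_exp, h_z, ← mul_assoc, ← mul_assoc, h_sqrt]

theorem tsum_gaussian_lattice_eq_jacobiTheta₂_mul (α β : ℝ) {ρ : ℝ} (hρ : 0 < ρ) :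
    ∑' p : ℤ × ℤ, exp (Real.pi * α * p.1) * exp (Real.pi * β * p.2) *
        exp (-Real.pi * (p.1 ^ 2 / ρ + ρ * p.2 ^ 2) / 2) =
      jacobiTheta₂ (I * α / 2) (I / (2 * ρ)) * jacobiTheta₂ (I * β / 2) (ρ * I / 2) := by
  have hρ' : (ρ : ℂ) ≠ 0 := ofReal_ne_zero.mpr hρ.ne'
  have hτ₁ : 0 < (I / (2 * ρ)).im := by
    rw [show I / (2 * ρ) = ((2 * ρ)⁻¹ : ℝ) * I by push_cast; ring]
    simpa using hρ
  have hτ₂ : 0 < ((ρ : ℂ) * I / 2).im := by simpa using hρ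
  rw [← jacobiTheta₂_neg_left, ← jacobiTheta₂_neg_left (I * β / 2), jacobiTheta₂, jacobiTheta₂,
    tsum_mul_tsum_of_summable_norm (summable_norm_jacobiTheta₂_term hτ₁ _)
    (summable_norm_jacobiTheta₂_term hτ₂ _)]
  refine tsum_congr fun p ↦ ?_
  simp only [jacobiTheta₂_term, ← exp_add]
  congr 1
  field_simp
  linear_combination (2 * α * p.1 * ρ - p.1 ^ 2 + 2 * β * p.2 * ρ - p.2 ^ 2 * ρ ^ 2) * I_sq

/-- For `ζ = (π/2)(ρα + iβ)` and `q = e^{-ρπ}`,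
`Σ_{i=1}^4 ϑᵢ(ζ,q)ϑᵢ(ζ̄,q) = √(2/ρ) e^{-πα²ρ/2} Σ_{(k,ℓ)} e^{παk} e^{πβℓ} e^{-π(k²/ρ+ρℓ²)/2}`. -/
theorem sum_theta_products_gaussian (α β ρ : ℝ) (hρ : 0 < ρ) :
    theta1 ((Real.pi : ℂ) / 2 * ((ρ : ℂ) * (α : ℂ) + Complex.I * (β : ℂ))) ρ *
        theta1 ((Real.pi : ℂ) / 2 * ((ρ : ℂ) * (α : ℂ) - Complex.I * (β : ℂ))) ρ +
      theta2 ((Real.pi : ℂ) / 2 * ((ρ : ℂ) * (α : ℂ) + Complex.I * (β : ℂ))) ρ *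
        theta2 ((Real.pi : ℂ) / 2 * ((ρ : ℂ) * (α : ℂ) - Complex.I * (β : ℂ))) ρ +
      theta3 ((Real.pi : ℂ) / 2 * ((ρ : ℂ) * (α : ℂ) + Complex.I * (β : ℂ))) ρ *
        theta3 ((Real.pi : ℂ) / 2 * ((ρ : ℂ) * (α : ℂ) - Complex.I * (β : ℂ))) ρ +
      theta4 ((Real.pi : ℂ) / 2 * ((ρ : ℂ) * (α : ℂ) + Complex.I * (β : ℂ))) ρ *
        theta4 ((Real.pi : ℂ) / 2 * ((ρ : ℂ) * (α : ℂ) - Complex.I * (β : ℂ))) ρ =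
    (Real.sqrt (2 / ρ) : ℂ) * Complex.exp (-(Real.pi : ℂ) * (α : ℂ) ^ 2 * (ρ : ℂ) / 2) *
      ∑' p : ℤ × ℤ,
        Complex.exp ((Real.pi : ℂ) * (α : ℂ) * (p.1 : ℂ)) *
          Complex.exp ((Real.pi : ℂ) * (β : ℂ) * (p.2 : ℂ)) *
          Complex.exp (-(Real.pi : ℂ) * ((p.1 : ℂ) ^ 2 / (ρ : ℂ) + (ρ : ℂ) * (p.2 : ℂ) ^ 2) / 2) := by
  have hπ : (Real.pi : ℂ) ≠ 0 := ofReal_ne_zero.mpr Real.pi_ne_zero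
  have h_add : ((Real.pi : ℂ) / 2 * (ρ * α + I * β) + (Real.pi : ℂ) / 2 * (ρ * α - I * β)) /
      Real.pi = ρ * α := by
    field_simp
    ring
  have h_sub : ((Real.pi : ℂ) / 2 * (ρ * α + I * β) - (Real.pi : ℂ) / 2 * (ρ * α - I * β)) /
      (2 * Real.pi) = I * β / 2 := by
    field_simp
    ring
  rw [sum_theta_mul_theta hρ, h_add, h_sub, two_mul_jacobiTheta₂_two_mul_I hρ,
    tsum_gaussian_lattice_eq_jacobiTheta₂_mul α β hρ, mul_assoc]
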